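/- Let λ > 0 and let Y ∈ ℝ^{m×n} have a singular value decomposition Y = U Σ V⊤ with Σ = diag(σ₁, …, σ_r), σ₁ ≥ ⋯ ≥ σ_r > 0, of rank r. Then the proximal operator of the nuclear norm, prox_{λ‖·‖_*}(Y) := argmin_{X ∈ ℝ^{m×n}} { (1/2)‖X − Y‖_F² + λ‖X‖_* }, is given by singular value soft-thresholding: prox_{λ‖·‖_*}(Y) = U diag((σ_i − λ)_+) V⊤, where (t)_+ := max{t, 0}. -/

import Mathlib

open Matrix

/-- The nuclear norm of a real matrix: the sum of its singular values. -/
noncomputable def nuclearNorm {p m : Type*} [Fintype p] [Fintype m] [DecidableEq m]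
    (A : Matrix p m ℝ) : ℝ :=
  ∑ i, Real.sqrt ((show (Aᵀ * A).IsHermitian by
    simpa using Matrix.isHermitian_conjTranspose_mul_self A).eigenvalues i)

/-- The Frobenius norm of a real matrix. -/
noncomputable def frobNorm {p m : Type*} [Fintype p] [Fintype m]
    (A : Matrix p m ℝ) : ℝ :=
  Real.sqrt (∑ i, ∑ j, (A i j) ^ 2)

/-! With `s = (σ - λ)₊` and `d = min(σ, λ) / λ`, the candidate `W = U diag(s) Vᵀ` and
`G = U diag(d) Vᵀ` satisfy `Y - W = λ G`. Since `G` is a contraction, trace duality gives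
`tr(Gᵀ X) ≤ ‖X‖_*` for every `X`, while `tr(Gᵀ W) = ∑ s ≥ ‖W‖_*`; so `G` is a subgradient of the
nuclear norm at `W`. Expanding the square then shows that the objective at any `X` exceeds the
objective at `W` by at least `½ ‖X - W‖_F²`, which gives both optimality and uniqueness. -/

theorem Matrix.isHermitian_transpose_mul_self {m n : Type*} [Fintype m] (A : Matrix m n ℝ) :
    (Aᵀ * A).IsHermitian := by
  simpa using isHermitian_conjTranspose_mul_self A

variable {m n k : Type*} [Fintype m] [Fintype n]

lemma nuclearNorm_eq_sum_sqrt_eigenvalues [DecidableEq n] (A : Matrix m n ℝ) :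
    nuclearNorm A = ∑ i, √((isHermitian_transpose_mul_self A).eigenvalues i) :=
  rfl

lemma frobNorm_sq (A : Matrix m n ℝ) : frobNorm A ^ 2 = trace (Aᵀ * A) := by
  rw [frobNorm, Real.sq_sqrt (by positivity), Finset.sum_comm]
  simp only [trace, diag_apply, mul_apply, transpose_apply, sq]

lemma frobNorm_eq_zero_iff {A : Matrix m n ℝ} : frobNorm A = 0 ↔ A = 0 := by
  rw [← pow_eq_zero_iff two_ne_zero, frobNorm_sq, ← conjTranspose_eq_transpose_of_trivial,
    trace_conjTranspose_mul_self_eq_zero_iff]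

lemma exists_orthogonal_diagonalize_transpose_mul_self [DecidableEq n] (X : Matrix m n ℝ) :
    ∃ Q : Matrix n n ℝ, Qᵀ * Q = 1 ∧ Q * Qᵀ = 1 ∧
      (X * Q)ᵀ * (X * Q) = diagonal (isHermitian_transpose_mul_self X).eigenvalues := by
  set hH := isHermitian_transpose_mul_self X
  have hQ := hH.eigenvectorUnitary.2
  have hdiag := hH.conjStarAlgAut_star_eigenvectorUnitary
  rw [Unitary.conjStarAlgAut_star_apply, RCLike.ofReal_real_eq_id, Function.id_comp] at hdiag
  simp only [star_eq_conjTranspose, conjTranspose_eq_transpose_of_trivial] at hQ hdiag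
  refine ⟨hH.eigenvectorUnitary, (mem_unitaryGroup_iff').mp hQ, (mem_unitaryGroup_iff).mp hQ, ?_⟩
  rw [← hdiag, transpose_mul, Matrix.mul_assoc, Matrix.mul_assoc, ← Matrix.mul_assoc Xᵀ]

def IsContraction (A : Matrix m n ℝ) : Prop :=
  ∀ x, (A *ᵥ x) ⬝ᵥ (A *ᵥ x) ≤ x ⬝ᵥ x

lemma mulVec_dotProduct_mulVec_self (A : Matrix m n ℝ) (x : n → ℝ) :
    (A *ᵥ x) ⬝ᵥ (A *ᵥ x) = x ⬝ᵥ ((Aᵀ * A) *ᵥ x) := by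
  rw [← mulVec_mulVec, dotProduct_mulVec x, vecMul_transpose]

lemma IsContraction.mul [Fintype k] {A : Matrix m n ℝ} {B : Matrix n k ℝ}
    (hA : IsContraction A) (hB : IsContraction B) : IsContraction (A * B) := fun x => by
  rw [← mulVec_mulVec]
  exact (hA _).trans (hB x)

lemma isContraction_of_transpose_mul_self_eq_diagonal [DecidableEq n] {A : Matrix m n ℝ}
    {e : n → ℝ} (hA : Aᵀ * A = diagonal e) (he : ∀ i, e i ≤ 1) : IsContraction A := fun x => by
  rw [mulVec_dotProduct_mulVec_self, hA]
  refine Finset.sum_le_sum fun i _ => ?_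
  rw [mulVec_diagonal]
  nlinarith [he i, mul_self_nonneg (x i)]

lemma isContraction_transpose_of_transpose_mul_self_eq_one [DecidableEq n] {V : Matrix m n ℝ}
    (hV : Vᵀ * V = 1) : IsContraction Vᵀ := fun x => by
  have hproj : (x - V *ᵥ (Vᵀ *ᵥ x)) ⬝ᵥ (x - V *ᵥ (Vᵀ *ᵥ x)) =
      x ⬝ᵥ x - (Vᵀ *ᵥ x) ⬝ᵥ (Vᵀ *ᵥ x) := by
    have hcross : x ⬝ᵥ (V *ᵥ (Vᵀ *ᵥ x)) = (Vᵀ *ᵥ x) ⬝ᵥ (Vᵀ *ᵥ x) := by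
      rw [dotProduct_mulVec, ← mulVec_transpose, dotProduct_comm]
    rw [sub_dotProduct, dotProduct_sub, dotProduct_sub, mulVec_dotProduct_mulVec_self, hV,
      one_mulVec, dotProduct_comm (V *ᵥ _), hcross]
    ring
  have := dotProduct_star_self_nonneg (x - V *ᵥ (Vᵀ *ᵥ x))
  rw [star_trivial] at this
  linarith

lemma IsContraction.diag_transpose_mul_self_le {G : Matrix m n ℝ} (hG : IsContraction G)
    (P : Matrix n k ℝ) (i : k) : ((G * P)ᵀ * (G * P)) i i ≤ (Pᵀ * P) i i := by
  simpa [mul_apply, mulVec, dotProduct, mul_comm] using hG (fun j => P j i)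

lemma trace_transpose_mul_le_sum_sqrt (A B : Matrix m n ℝ) :
    trace (Aᵀ * B) ≤ ∑ i, √((Aᵀ * A) i i) * √((Bᵀ * B) i i) :=
  Finset.sum_le_sum fun i _ => by
    simpa [mul_apply, sq] using Real.sum_mul_le_sqrt_mul_sqrt Finset.univ (A · i) (B · i)

lemma IsContraction.trace_transpose_mul_le [Fintype k] [DecidableEq k] {G : Matrix m n ℝ}
    (hG : IsContraction G) {P : Matrix n k ℝ} (hP : Pᵀ * P = 1) {B : Matrix m k ℝ} {c : k → ℝ}
    (hB : Bᵀ * B = diagonal c) : trace ((G * P)ᵀ * B) ≤ ∑ i, √(c i) := by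
  refine (trace_transpose_mul_le_sum_sqrt _ _).trans (Finset.sum_le_sum fun i _ => ?_)
  rw [hB, diagonal_apply_eq]
  refine mul_le_of_le_one_left (Real.sqrt_nonneg _) (Real.sqrt_le_one.mpr ?_)
  simpa [hP] using hG.diag_transpose_mul_self_le P i

lemma IsContraction.trace_transpose_mul_le_nuclearNorm [DecidableEq n] {G : Matrix m n ℝ}
    (hG : IsContraction G) (X : Matrix m n ℝ) : trace (Gᵀ * X) ≤ nuclearNorm X := by
  obtain ⟨Q, hQ, hQ', hXQ⟩ := exists_orthogonal_diagonalize_transpose_mul_self X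
  have hconj : trace (Gᵀ * X) = trace ((G * Q)ᵀ * (X * Q)) := by
    rw [transpose_mul, Matrix.mul_assoc, trace_mul_comm Qᵀ, Matrix.mul_assoc, Matrix.mul_assoc X,
      hQ', Matrix.mul_one]
  rw [hconj, nuclearNorm_eq_sum_sqrt_eigenvalues]
  exact hG.trace_transpose_mul_le hQ hXQ

/-- The witness is the polar factor `X Q diag(μ^{-1/2}) Qᵀ` of `X`; Lean's `(√0)⁻¹ = 0` makes
`diag(μ^{-1/2})` a pseudo-inverse square root. -/
lemma exists_isContraction_trace_transpose_mul_eq_nuclearNorm [DecidableEq n]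
    (X : Matrix m n ℝ) :
    ∃ G : Matrix m n ℝ, IsContraction G ∧ trace (Gᵀ * X) = nuclearNorm X := by
  obtain ⟨Q, hQ, -, hXQ⟩ := exists_orthogonal_diagonalize_transpose_mul_self X
  set μ := (isHermitian_transpose_mul_self X).eigenvalues
  set D : Matrix n n ℝ := diagonal fun i => (√(μ i))⁻¹
  have hD : Dᵀ = D := diagonal_transpose _
  have hXQD : (X * Q * D)ᵀ * (X * Q * D) = diagonal fun i => μ i * ((√(μ i))⁻¹) ^ 2 := by
    rw [transpose_mul, hD, Matrix.mul_assoc, ← Matrix.mul_assoc (X * Q)ᵀ, hXQ,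
      diagonal_mul_diagonal, diagonal_mul_diagonal]
    congr 1; funext i; ring
  have hcontr : IsContraction (X * Q * D) := by
    refine isContraction_of_transpose_mul_self_eq_diagonal hXQD fun i => ?_
    rcases le_or_gt (μ i) 0 with hμ | hμ
    · simp [Real.sqrt_eq_zero'.mpr hμ]
    · rw [inv_pow, Real.sq_sqrt hμ.le, mul_inv_cancel₀ hμ.ne']
  refine ⟨X * Q * D * Qᵀ,
    hcontr.mul (isContraction_transpose_of_transpose_mul_self_eq_one hQ), ?_⟩
  calc trace ((X * Q * D * Qᵀ)ᵀ * X) = trace (D * ((X * Q)ᵀ * (X * Q))) := by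
        simp only [transpose_mul, transpose_transpose, hD, Matrix.mul_assoc]
        rw [trace_mul_comm]
        simp only [Matrix.mul_assoc]
    _ = nuclearNorm X := by
        rw [hXQ, diagonal_mul_diagonal, trace_diagonal, nuclearNorm_eq_sum_sqrt_eigenvalues]
        exact Finset.sum_congr rfl fun i _ => by rw [inv_mul_eq_div, Real.div_sqrt]

section OrthonormalColumns

variable [Fintype k] [DecidableEq k] {U : Matrix m k ℝ} {V : Matrix n k ℝ}

lemma transpose_mul_diagonal_mul_mul_diagonal (hU : Uᵀ * U = 1) (d s : k → ℝ) :
    (U * diagonal d)ᵀ * (U * diagonal s) = diagonal fun j => d j * s j := by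
  rw [transpose_mul, diagonal_transpose, Matrix.mul_assoc, ← Matrix.mul_assoc Uᵀ, hU,
    Matrix.one_mul, diagonal_mul_diagonal]

lemma isContraction_mul_diagonal_mul_transpose [DecidableEq n] (hU : Uᵀ * U = 1)
    (hV : Vᵀ * V = 1) {d : k → ℝ} (hd : ∀ j, |d j| ≤ 1) : IsContraction (U * diagonal d * Vᵀ) :=
  (isContraction_of_transpose_mul_self_eq_diagonal
    (transpose_mul_diagonal_mul_mul_diagonal hU d d) fun j => by simpa [← sq] using hd j).mul
    (isContraction_transpose_of_transpose_mul_self_eq_one hV)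

lemma trace_transpose_mul_diagonal_mul_transpose (hU : Uᵀ * U = 1) (hV : Vᵀ * V = 1)
    (d s : k → ℝ) :
    trace ((U * diagonal d * Vᵀ)ᵀ * (U * diagonal s * Vᵀ)) = ∑ j, d j * s j := by
  calc trace ((U * diagonal d * Vᵀ)ᵀ * (U * diagonal s * Vᵀ))
      = trace ((U * diagonal d)ᵀ * (U * diagonal s) * (Vᵀ * V)) := by
        simp only [transpose_mul, transpose_transpose, Matrix.mul_assoc]
        rw [trace_mul_comm V]
        simp only [Matrix.mul_assoc]
    _ = ∑ j, d j * s j := by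
        rw [hV, Matrix.mul_one, transpose_mul_diagonal_mul_mul_diagonal hU, trace_diagonal]

lemma nuclearNorm_mul_diagonal_mul_transpose_le [DecidableEq n] (hU : Uᵀ * U = 1)
    (hV : Vᵀ * V = 1) {s : k → ℝ} (hs : ∀ j, 0 ≤ s j) :
    nuclearNorm (U * diagonal s * Vᵀ) ≤ ∑ j, s j := by
  obtain ⟨G, hG, hGW⟩ := exists_isContraction_trace_transpose_mul_eq_nuclearNorm
    (U * diagonal s * Vᵀ)
  have hcycle : trace (Gᵀ * (U * diagonal s * Vᵀ)) = trace ((G * V)ᵀ * (U * diagonal s)) := by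
    rw [transpose_mul, ← Matrix.mul_assoc, trace_mul_cycle, Matrix.mul_assoc]
  calc nuclearNorm (U * diagonal s * Vᵀ) = trace ((G * V)ᵀ * (U * diagonal s)) := by
        rw [← hGW, hcycle]
    _ ≤ ∑ j, √(s j * s j) :=
        hG.trace_transpose_mul_le hV (transpose_mul_diagonal_mul_mul_diagonal hU s s)
    _ = ∑ j, s j := Finset.sum_congr rfl fun j _ => Real.sqrt_mul_self (hs j)

end OrthonormalColumns

lemma objective_add_half_frobNorm_sq_le_of_subgradient {N : Matrix m n ℝ → ℝ} {lam : ℝ}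
    (hlam : 0 ≤ lam) {W Y G : Matrix m n ℝ} (hYW : Y - W = lam • G)
    (hG : ∀ X, trace (Gᵀ * X) ≤ N X) (hW : N W ≤ trace (Gᵀ * W)) (X : Matrix m n ℝ) :
    (1 / 2) * frobNorm (W - Y) ^ 2 + lam * N W + (1 / 2) * frobNorm (X - W) ^ 2 ≤
      (1 / 2) * frobNorm (X - Y) ^ 2 + lam * N X := by
  have hXY : X - Y = (X - W) - lam • G := by rw [← hYW]; abel
  have hWY : W - Y = -(lam • G) := by rw [← hYW]; abel
  have hsymm : trace ((X - W)ᵀ * G) = trace (Gᵀ * (X - W)) := by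
    rw [← trace_transpose, transpose_mul, transpose_transpose]
  have hsplit : trace (Gᵀ * (X - W)) = trace (Gᵀ * X) - trace (Gᵀ * W) := by
    rw [Matrix.mul_sub, trace_sub]
  rw [frobNorm_sq, frobNorm_sq, frobNorm_sq, hXY, hWY]
  set A := X - W
  simp only [transpose_sub, transpose_neg, transpose_smul, Matrix.sub_mul, Matrix.mul_sub,
    Matrix.neg_mul, Matrix.mul_neg, Matrix.smul_mul, Matrix.mul_smul, trace_sub, trace_neg,
    trace_smul, smul_eq_mul, hsymm, hsplit]
  linarith [mul_le_mul_of_nonneg_left (hG X) hlam, mul_le_mul_of_nonneg_left hW hlam]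

theorem prox_nuclearNorm_soft_thresholding_general
    {m n r : ℕ} (lam : ℝ) (hlam : 0 < lam)
    (Y : Matrix (Fin m) (Fin n) ℝ)
    (U : Matrix (Fin m) (Fin r) ℝ) (V : Matrix (Fin n) (Fin r) ℝ)
    (σ : Fin r → ℝ)
    (hU : Uᵀ * U = 1) (hV : Vᵀ * V = 1)
    (hσpos : ∀ i, 0 < σ i)
    (hY : Y = U * Matrix.diagonal σ * Vᵀ) :
    (∀ X : Matrix (Fin m) (Fin n) ℝ,
      (1 / 2) * frobNorm (U * Matrix.diagonal (fun i => max (σ i - lam) 0) * Vᵀ - Y) ^ 2 +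
          lam * nuclearNorm (U * Matrix.diagonal (fun i => max (σ i - lam) 0) * Vᵀ) ≤
        (1 / 2) * frobNorm (X - Y) ^ 2 + lam * nuclearNorm X) ∧
    (∀ X : Matrix (Fin m) (Fin n) ℝ,
      (∀ Z : Matrix (Fin m) (Fin n) ℝ,
        (1 / 2) * frobNorm (X - Y) ^ 2 + lam * nuclearNorm X ≤
          (1 / 2) * frobNorm (Z - Y) ^ 2 + lam * nuclearNorm Z) →
      X = U * Matrix.diagonal (fun i => max (σ i - lam) 0) * Vᵀ) := by
  set s : Fin r → ℝ := fun i => max (σ i - lam) 0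
  set d : Fin r → ℝ := fun i => min (σ i) lam / lam
  set W := U * diagonal s * Vᵀ
  set G := U * diagonal d * Vᵀ
  have hσs : ∀ i, σ i - s i = lam * d i := fun i => by
    rw [mul_div_cancel₀ _ hlam.ne']
    rcases le_total (σ i) lam with h | h <;> simp [s, h]
  have hds : ∀ i, d i * s i = s i := fun i => by
    rcases le_total (σ i) lam with h | h <;> simp [s, d, h, hlam.ne']
  have hd : ∀ i, |d i| ≤ 1 := fun i => by
    rw [abs_div, abs_of_pos hlam, div_le_one hlam, abs_of_nonneg (le_min (hσpos i).le hlam.le)]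
    exact min_le_right _ _
  have hYW : Y - W = lam • G := by
    rw [hY, ← Matrix.sub_mul, ← Matrix.mul_sub, diagonal_sub, ← Matrix.smul_mul,
      ← Matrix.mul_smul, ← diagonal_smul]
    exact congrArg (U * diagonal · * Vᵀ) (funext hσs)
  have hW : nuclearNorm W ≤ trace (Gᵀ * W) := by
    rw [trace_transpose_mul_diagonal_mul_transpose hU hV, Finset.sum_congr rfl fun i _ => hds i]
    exact nuclearNorm_mul_diagonal_mul_transpose_le hU hV fun i => le_max_right _ _
  have key := objective_add_half_frobNorm_sq_le_of_subgradient hlam.le hYW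
    (isContraction_mul_diagonal_mul_transpose hU hV hd).trace_transpose_mul_le_nuclearNorm hW
  refine ⟨fun X => by linarith [key X, sq_nonneg (frobNorm (X - W))], fun X hX => ?_⟩
  have hXW : frobNorm (X - W) ^ 2 ≤ 0 := by linarith [key X, hX W]
  exact sub_eq_zero.mp <| frobNorm_eq_zero_iff.mp <|
    pow_eq_zero_iff two_ne_zero |>.mp (le_antisymm hXW (sq_nonneg _))

/-- **Singular value soft-thresholding computes the nuclear-norm proximal operator.**
Let `λ > 0` and let `Y = U Σ Vᵀ` be a rank-`r` singular value decomposition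
(`U ∈ ℝ^{m×r}`, `V ∈ ℝ^{n×r}` with orthonormal columns, `Σ = diag(σ₁ ≥ ⋯ ≥ σ_r > 0)`).
Then `U diag((σᵢ − λ)₊) Vᵀ` is the unique minimizer of
`X ↦ (1/2)‖X − Y‖_F² + λ‖X‖_*`, i.e. it equals `prox_{λ‖·‖_*}(Y)`. -/
theorem prox_nuclearNorm_soft_thresholding
    {m n r : ℕ} (lam : ℝ) (hlam : 0 < lam)
    (Y : Matrix (Fin m) (Fin n) ℝ)
    (U : Matrix (Fin m) (Fin r) ℝ) (V : Matrix (Fin n) (Fin r) ℝ)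
    (σ : Fin r → ℝ)
    (hU : Uᵀ * U = 1) (hV : Vᵀ * V = 1)
    (hσpos : ∀ i, 0 < σ i) (hσanti : Antitone σ)
    (hY : Y = U * Matrix.diagonal σ * Vᵀ)
    (hrank : Y.rank = r) :
    (∀ X : Matrix (Fin m) (Fin n) ℝ,
      (1 / 2) * frobNorm (U * Matrix.diagonal (fun i => max (σ i - lam) 0) * Vᵀ - Y) ^ 2 +
          lam * nuclearNorm (U * Matrix.diagonal (fun i => max (σ i - lam) 0) * Vᵀ) ≤
        (1 / 2) * frobNorm (X - Y) ^ 2 + lam * nuclearNorm X) ∧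
    (∀ X : Matrix (Fin m) (Fin n) ℝ,
      (∀ Z : Matrix (Fin m) (Fin n) ℝ,
        (1 / 2) * frobNorm (X - Y) ^ 2 + lam * nuclearNorm X ≤
          (1 / 2) * frobNorm (Z - Y) ^ 2 + lam * nuclearNorm Z) →
      X = U * Matrix.diagonal (fun i => max (σ i - lam) 0) * Vᵀ) :=
  prox_nuclearNorm_soft_thresholding_general lam hlam Y U V σ hU hV hσpos hY
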